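/- arXiv:2402.05771 — 2 statements merged into one kernel-verified Lean document; each statement's English description precedes it below -/
import Mathlib

section
/- For every positive integer n, the q-Catalan number Cat_n(q) = (1/[n+1]_q)·qbinom(2n,n) evaluated at q = −1 equals C(n, ⌊n/2⌋); that is, Cat_n(−1) = C(n, n/2) if n is even and C(n, (n−1)/2) if n is odd. -/
open scoped Classical

noncomputable def qInt {K : Type*} [Field K] (q : K) (n : ℕ) : K :=
  ∑ i ∈ Finset.range n, q ^ i

noncomputable def qFact {K : Type*} [Field K] (q : K) (n : ℕ) : K :=
  ∏ i ∈ Finset.range n, qInt q (i + 1)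

noncomputable def qBinom {K : Type*} [Field K] (q : K) (n k : ℕ) : K :=
  qFact q n / (qFact q k * qFact q (n - k))

noncomputable def qCat {K : Type*} [Field K] (q : K) (n : ℕ) : K :=
  qBinom q (2 * n) n / qInt q (n + 1)

/-!
Clearing denominators, `Cat_n(q) · [n+1]_q! · [n]_q! = [2n]_q!`. Since
`[2j]_q = (1 + q) · [j]_{q²}` while `[2j+1]_{-1} = 1`, each `[m]_q!` factors as
`(1 + q)^⌊m/2⌋ · G_m(q)` with `G_m(-1) = ⌊m/2⌋!`. The powers of `1 + q` cancel exactly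
(`⌊(n+1)/2⌋ + ⌊n/2⌋ = n = ⌊2n/2⌋`), and evaluating at `q = -1` leaves
`Cat_n(-1) · ⌈n/2⌉! · ⌊n/2⌋! = n!`.
-/

open Polynomial Finset

lemma qFact_succ {K : Type*} [Field K] (q : K) (n : ℕ) :
    qFact q (n + 1) = qFact q n * qInt q (n + 1) :=
  prod_range_succ _ _

lemma qCat_mul_qFact_mul_qFact {K : Type*} [Field K] {q : K} {n : ℕ}
    (h : qFact q (n + 1) ≠ 0) :
    qCat q n * (qFact q (n + 1) * qFact q n) = qFact q (2 * n) := by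
  rw [qFact_succ, mul_ne_zero_iff] at h
  rw [qCat, qBinom, show 2 * n - n = n by omega, qFact_succ]
  field_simp [h.1, h.2]

lemma geom_sum_two_mul {R : Type*} [CommSemiring R] (x : R) (j : ℕ) :
    ∑ i ∈ range (2 * j), x ^ i = (1 + x) * ∑ i ∈ range j, (x ^ 2) ^ i := by
  induction j with
  | zero => simp
  | succ j ih =>
    rw [show 2 * (j + 1) = 2 * j + 1 + 1 by ring, sum_range_succ, sum_range_succ, ih,
      sum_range_succ]
    ring

section QAnalogPolynomials

variable (R : Type*) [CommRing R]

noncomputable def qIntPoly (k : ℕ) : R[X] := ∑ i ∈ range k, X ^ i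

noncomputable def qFactPoly (m : ℕ) : R[X] := ∏ i ∈ range m, qIntPoly R (i + 1)

/-- `[k]_q` with its factor `1 + q` removed when `k` is even. -/
noncomputable def qIntCofactor (k : ℕ) : R[X] :=
  if Even k then ∑ i ∈ range (k / 2), (X ^ 2) ^ i else qIntPoly R k

noncomputable def qFactCofactor (m : ℕ) : R[X] := ∏ i ∈ range m, qIntCofactor R (i + 1)

variable {R}

lemma qFactPoly_monic (m : ℕ) : (qFactPoly R m).Monic :=
  monic_prod_of_monic _ _ fun _ _ ↦ monic_geom_sum_X (Nat.succ_ne_zero _)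

lemma qIntPoly_of_even {k : ℕ} (hk : Even k) :
    qIntPoly R k = (1 + X) * qIntCofactor R k := by
  obtain ⟨j, rfl⟩ := hk
  rw [qIntCofactor, if_pos ⟨j, rfl⟩, ← two_mul, Nat.mul_div_cancel_left j two_pos, qIntPoly,
    geom_sum_two_mul]

lemma qFactPoly_eq_mul_qFactCofactor (m : ℕ) :
    qFactPoly R m = (1 + X) ^ (m / 2) * qFactCofactor R m := by
  induction m with
  | zero => simp [qFactPoly, qFactCofactor]
  | succ m ih =>
    rw [qFactPoly, qFactCofactor, prod_range_succ, prod_range_succ, ← qFactPoly,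
      ← qFactCofactor, ih]
    rcases Nat.even_or_odd (m + 1) with he | ho
    · rw [qIntPoly_of_even he, show (m + 1) / 2 = m / 2 + 1 by obtain ⟨j, hj⟩ := he; omega]
      ring
    · rw [qIntCofactor, if_neg (Nat.not_even_iff_odd.2 ho),
        show (m + 1) / 2 = m / 2 by obtain ⟨j, hj⟩ := ho; omega]
      ring

lemma eval_neg_one_qIntCofactor (k : ℕ) :
    (qIntCofactor R k).eval (-1) = if Even k then ((k / 2 : ℕ) : R) else 1 := by
  split_ifs with hk
  · simp [qIntCofactor, if_pos hk, eval_finsetSum]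
  · rw [qIntCofactor, if_neg hk, qIntPoly]
    simp only [eval_finsetSum, eval_pow, eval_X, neg_one_geom_sum, if_neg hk]

lemma eval_neg_one_qFactCofactor (m : ℕ) :
    (qFactCofactor R m).eval (-1) = ((m / 2).factorial : R) := by
  induction m with
  | zero => simp [qFactCofactor]
  | succ m ih =>
    rw [qFactCofactor, prod_range_succ, eval_mul, ← qFactCofactor, ih,
      eval_neg_one_qIntCofactor]
    split_ifs with he
    · rw [show (m + 1) / 2 = m / 2 + 1 by obtain ⟨j, hj⟩ := he; omega, Nat.factorial_succ]
      push_cast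
      ring
    · rw [show (m + 1) / 2 = m / 2 by
        obtain ⟨j, hj⟩ := Nat.not_even_iff_odd.1 he; omega, mul_one]

lemma eval_neg_one_mul_factorial_of_mul_qFactPoly {P : R[X]} {n : ℕ}
    (hP : P * (qFactPoly R (n + 1) * qFactPoly R n) = qFactPoly R (2 * n)) :
    P.eval (-1) * (((n + 1) / 2).factorial * (n / 2).factorial) = (n.factorial : R) := by
  have hcancel : (1 + X : R[X]) ^ n * (P * (qFactCofactor R (n + 1) * qFactCofactor R n))
      = (1 + X) ^ n * qFactCofactor R (2 * n) := by
    rw [qFactPoly_eq_mul_qFactCofactor, qFactPoly_eq_mul_qFactCofactor,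
      qFactPoly_eq_mul_qFactCofactor, Nat.mul_div_cancel_left n two_pos] at hP
    have hsplit : (1 + X : R[X]) ^ n = (1 + X) ^ ((n + 1) / 2) * (1 + X) ^ (n / 2) := by
      rw [← pow_add, show (n + 1) / 2 + n / 2 = n by omega]
    rw [← hP, hsplit]
    ring
  have hmonic : ((1 + X : R[X]) ^ n).Monic := by
    simpa [add_comm] using (monic_X_add_C (1 : R)).pow n
  have hG := congrArg (eval (-1)) (hmonic.isRegular.left hcancel)
  simpa only [eval_mul, eval_neg_one_qFactCofactor, Nat.mul_div_cancel_left n two_pos] using hG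

end QAnalogPolynomials

section RationalFunctions

variable {K : Type*} [Field K]

lemma algebraMap_qFactPoly (m : ℕ) :
    algebraMap K[X] (RatFunc K) (qFactPoly K m) = qFact (RatFunc.X : RatFunc K) m := by
  simp [qFactPoly, qIntPoly, qFact, qInt, map_prod, map_sum, RatFunc.algebraMap_X]

lemma mul_qFactPoly_of_algebraMap_eq_qCat {P : K[X]} {n : ℕ}
    (hP : algebraMap K[X] (RatFunc K) P = qCat (RatFunc.X : RatFunc K) n) :
    P * (qFactPoly K (n + 1) * qFactPoly K n) = qFactPoly K (2 * n) := by
  have hne : qFact (RatFunc.X : RatFunc K) (n + 1) ≠ 0 := by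
    rw [← algebraMap_qFactPoly, map_ne_zero_iff _ (RatFunc.algebraMap_injective K)]
    exact (qFactPoly_monic _).ne_zero
  apply RatFunc.algebraMap_injective K
  simp only [map_mul, algebraMap_qFactPoly, hP, qCat_mul_qFact_mul_qFact hne]

end RationalFunctions

theorem qCatalan_at_neg_one_general (n : ℕ)
    (P : Polynomial ℚ)
    (hP : algebraMap (Polynomial ℚ) (RatFunc ℚ) P = qCat (RatFunc.X : RatFunc ℚ) n) :
    P.eval (-1 : ℚ) = (n.choose (n / 2) : ℚ) := by
  have hval := eval_neg_one_mul_factorial_of_mul_qFactPoly (mul_qFactPoly_of_algebraMap_eq_qCat hP)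
  have hchoose : (n.choose (n / 2) : ℚ) * (((n + 1) / 2).factorial * (n / 2).factorial)
      = n.factorial := by
    have h := Nat.choose_mul_factorial_mul_factorial (Nat.div_le_self n 2)
    rw [show n - n / 2 = (n + 1) / 2 by omega] at h
    rw [← h]
    push_cast
    ring
  exact mul_right_cancel₀ (by positivity) (hval.trans hchoose.symm)

theorem qCatalan_at_neg_one (n : ℕ) (hn : 1 ≤ n)
    (P : Polynomial ℚ)
    (hP : algebraMap (Polynomial ℚ) (RatFunc ℚ) P = qCat (RatFunc.X : RatFunc ℚ) n) :
    P.eval (-1 : ℚ) = (n.choose (n / 2) : ℚ) :=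
  qCatalan_at_neg_one_general n P hP
end

section
/- Let F(m) denote the number of noncrossing (1,2)-configurations of [m] fixed by the reflection i ↦ m+1−i. Then F(0)=1, F(1)=2, F(2)=3, F(3)=6, and for m ≥ 4, F(m) = 3F(m−2) + Σ_{i=2}^{⌊m/2⌋} Cat_{i−1}·F(m−2i), where Cat_j is the j-th Catalan number. -/
open scoped Classical

def IsConfig (m : ℕ) (x : Finset (Finset ℕ)) : Prop :=
  (∀ B ∈ x, B ⊆ Finset.Icc 1 m ∧ (B.card = 1 ∨ B.card = 2)) ∧
  (∀ B ∈ x, ∀ C ∈ x, B ≠ C → Disjoint B C) ∧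
  (∀ i₁ j₁ i₂ j₂ : ℕ, ({i₁, j₁} : Finset ℕ) ∈ x → ({i₂, j₂} : Finset ℕ) ∈ x →
    i₁ < i₂ → i₂ < j₁ → j₁ < j₂ → False)

noncomputable def Configs (m : ℕ) : Finset (Finset (Finset ℕ)) :=
  ((Finset.Icc 1 m).powerset.powerset).filter (IsConfig m)

/-!
Classify a configuration by the block containing its first point `a`. On an interval of
length `n` that point is uncovered, a ball, or the left end of an arc `{a, q}` whose inside and
outside carry independent configurations; this is Segner's recurrence, so there are
`Cat (n + 1)` configurations.

A configuration on `[a, b]` invariant under `i ↦ a + b - i` has the mirror block at `b`: either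
`a` and `b` are both uncovered, or two balls, or the arc `{a, b}`, and each of these leaves an
invariant configuration of `[a + 1, b - 1]`; or there are two mirror arcs `{a, q}` and
`{a + b - q, b}` with `2 q < a + b`, and the configuration is an arbitrary one under `{a, q}`,
its mirror image, and an invariant one of the middle interval `[q + 1, a + b - q - 1]`.
Counts of invariant configurations only depend on the length of the interval.
-/

open Finset

def Crosses (B C : Finset ℕ) : Prop :=
  ∃ i ∈ B, ∃ j ∈ C, ∃ k ∈ B, ∃ l ∈ C, i < j ∧ j < k ∧ k < l

/-- The noncrossing condition is stated through membership rather than through pairs `{i, j} ∈ x`,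
so that it is visibly preserved by monotone and antitone relabellings. -/
structure IsConfigOn (s : Finset ℕ) (x : Finset (Finset ℕ)) : Prop where
  subset : ∀ B ∈ x, B ⊆ s
  nonempty : ∀ B ∈ x, B.Nonempty
  card_le_two : ∀ B ∈ x, #B ≤ 2
  disjoint : ∀ B ∈ x, ∀ C ∈ x, B ≠ C → Disjoint B C
  not_crosses : ∀ B ∈ x, ∀ C ∈ x, ¬Crosses B C

noncomputable def configsOn (s : Finset ℕ) : Finset (Finset (Finset ℕ)) :=
  s.powerset.powerset.filter (IsConfigOn s)

def relabel (f : ℕ → ℕ) (x : Finset (Finset ℕ)) : Finset (Finset ℕ) :=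
  x.image (image f)

def reflect (c : ℕ) : Finset (Finset ℕ) → Finset (Finset ℕ) :=
  relabel (c - ·)

noncomputable def symConfigsOn (s : Finset ℕ) (c : ℕ) : Finset (Finset (Finset ℕ)) :=
  (configsOn s).filter fun x => reflect c x = x

noncomputable def symConfigs (n : ℕ) : Finset (Finset (Finset ℕ)) :=
  symConfigsOn (Icc 1 n) (n + 1)

theorem pair_eq_pair_right {a q q' : ℕ} (h : ({a, q} : Finset ℕ) = {a, q'}) : q = q' := by
  have hq : q ∈ ({a, q'} : Finset ℕ) := h ▸ by simp
  have hq' : q' ∈ ({a, q} : Finset ℕ) := h ▸ by simp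
  simp only [mem_insert, mem_singleton] at hq hq'
  omega

theorem eq_pair_of_mem {B : Finset ℕ} {i k : ℕ} (hB : #B ≤ 2) (hi : i ∈ B) (hk : k ∈ B)
    (hik : i ≠ k) : B = {i, k} :=
  (eq_of_subset_of_card_le (by simp [insert_subset_iff, hi, hk]) (by rwa [card_pair hik])).symm

theorem isConfig_iff_isConfigOn {m : ℕ} {x : Finset (Finset ℕ)} :
    IsConfig m x ↔ IsConfigOn (Icc 1 m) x := by
  constructor
  · rintro ⟨hblock, hdisj, hnc⟩
    have hcard (B : Finset ℕ) (h : B ∈ x) : #B ≤ 2 := by rcases (hblock B h).2 with h | h <;> omega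
    refine ⟨fun B h => (hblock B h).1, fun B h => card_pos.1 ?_, hcard, hdisj, ?_⟩
    · rcases (hblock B h).2 with h | h <;> omega
    rintro B hB C hC ⟨i, hi, j, hj, k, hk, l, hl, hij, hjk, hkl⟩
    rw [eq_pair_of_mem (hcard B hB) hi hk (by omega)] at hB
    rw [eq_pair_of_mem (hcard C hC) hj hl (by omega)] at hC
    exact hnc i k j l hB hC hij hjk hkl
  · rintro ⟨hsub, hne, hcard, hdisj, hnc⟩
    refine ⟨fun B h => ⟨hsub B h, ?_⟩, hdisj, fun i₁ j₁ i₂ j₂ h₁ h₂ hi hj hk =>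
      hnc _ h₁ _ h₂ ⟨i₁, by simp, i₂, by simp, j₁, by simp, j₂, by simp, hi, hj, hk⟩⟩
    have := card_pos.2 (hne B h)
    have := hcard B h
    omega

theorem mem_configsOn {s : Finset ℕ} {x : Finset (Finset ℕ)} :
    x ∈ configsOn s ↔ IsConfigOn s x := by
  simp only [configsOn, mem_filter, mem_powerset, and_iff_right_iff_imp]
  exact fun hx B hB => mem_powerset.2 (hx.subset B hB)

theorem configs_eq_configsOn (m : ℕ) : Configs m = configsOn (Icc 1 m) := by
  ext x
  rw [mem_configsOn, Configs, mem_filter, isConfig_iff_isConfigOn, and_iff_right_iff_imp]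
  exact fun hx => mem_powerset.2 fun B hB => mem_powerset.2 (hx.subset B hB)

theorem isConfigOn_empty (s : Finset ℕ) : IsConfigOn s ∅ :=
  ⟨by simp, by simp, by simp, by simp, by simp⟩

theorem configsOn_empty : configsOn ∅ = {∅} := by
  ext x
  rw [mem_configsOn, mem_singleton]
  constructor
  · intro hx
    refine eq_empty_of_forall_notMem fun B hB => ?_
    obtain ⟨i, hi⟩ := hx.nonempty B hB
    simpa using hx.subset B hB hi
  · rintro rfl
    exact isConfigOn_empty ∅

namespace IsConfigOn

variable {s t : Finset ℕ} {x y : Finset (Finset ℕ)}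

theorem of_subset (hx : IsConfigOn s x) (hyx : y ⊆ x) (hy : ∀ B ∈ y, B ⊆ t) :
    IsConfigOn t y :=
  ⟨hy, fun B hB => hx.nonempty B (hyx hB), fun B hB => hx.card_le_two B (hyx hB),
    fun B hB C hC => hx.disjoint B (hyx hB) C (hyx hC),
    fun B hB C hC => hx.not_crosses B (hyx hB) C (hyx hC)⟩

theorem filter_subset (hx : IsConfigOn s x) (t : Finset ℕ) :
    IsConfigOn t (x.filter (· ⊆ t)) :=
  hx.of_subset (Finset.filter_subset _ _) fun _ hB => (mem_filter.1 hB).2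

theorem filter_subset_eq_self (hx : IsConfigOn s x) (hst : s ⊆ t) : x.filter (· ⊆ t) = x :=
  filter_true_of_mem fun B hB => (hx.subset B hB).trans hst

theorem filter_subset_eq_empty (hx : IsConfigOn s x) (hst : Disjoint s t) :
    x.filter (· ⊆ t) = ∅ :=
  filter_false_of_mem fun B hB hBt => by
    obtain ⟨_, hi⟩ := hx.nonempty B hB
    exact disjoint_left.1 hst (hx.subset B hB hi) (hBt hi)

theorem exists_eq_pair (hx : IsConfigOn s x) {B : Finset ℕ} (hB : B ∈ x) {a : ℕ} (ha : a ∈ B) :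
    ∃ q, B = {a, q} := by
  by_cases h : ∃ q ∈ B, q ≠ a
  · obtain ⟨q, hq, hqa⟩ := h
    exact ⟨q, eq_pair_of_mem (hx.card_le_two B hB) ha hq (Ne.symm hqa)⟩
  · push Not at h
    exact ⟨a, by rw [eq_singleton_iff_unique_mem.2 ⟨ha, h⟩]; simp⟩

theorem relabel (hx : IsConfigOn s x) {f : ℕ → ℕ} (hf : StrictMonoOn f s ∨ StrictAntiOn f s)
    (hft : ∀ i ∈ s, f i ∈ t) : IsConfigOn t (relabel f x) := by
  have hinj : Set.InjOn f s := hf.elim StrictMonoOn.injOn StrictAntiOn.injOn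
  refine ⟨?_, ?_, ?_, ?_, ?_⟩ <;> simp only [_root_.relabel, forall_mem_image]
  · intro B hB
    simpa only [image_subset_iff] using fun i hi => hft i (hx.subset B hB hi)
  · exact fun B hB => (hx.nonempty B hB).image f
  · exact fun B hB => card_image_le.trans (hx.card_le_two B hB)
  · intro B hB C hC hne
    refine disjoint_left.2 fun _ hfu hfv => ?_
    obtain ⟨u, hu, rfl⟩ := mem_image.1 hfu
    obtain ⟨v, hv, huv⟩ := mem_image.1 hfv
    obtain rfl := hinj (hx.subset C hC hv) (hx.subset B hB hu) huv
    exact disjoint_left.1 (hx.disjoint B hB C hC fun h => hne (h ▸ rfl)) hu hv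
  · rintro B hB C hC ⟨_, hfi, _, hfj, _, hfk, _, hfl, hij, hjk, hkl⟩
    obtain ⟨i, hi, rfl⟩ := mem_image.1 hfi
    obtain ⟨j, hj, rfl⟩ := mem_image.1 hfj
    obtain ⟨k, hk, rfl⟩ := mem_image.1 hfk
    obtain ⟨l, hl, rfl⟩ := mem_image.1 hfl
    have hiS := hx.subset B hB hi
    have hjS := hx.subset C hC hj
    have hkS := hx.subset B hB hk
    have hlS := hx.subset C hC hl
    rcases hf with hf | hf
    · exact hx.not_crosses B hB C hC ⟨i, hi, j, hj, k, hk, l, hl, (hf.lt_iff_lt hiS hjS).1 hij,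
        (hf.lt_iff_lt hjS hkS).1 hjk, (hf.lt_iff_lt hkS hlS).1 hkl⟩
    · exact hx.not_crosses C hC B hB ⟨l, hl, k, hk, j, hj, i, hi, (hf.lt_iff_gt hkS hlS).1 hkl,
        (hf.lt_iff_gt hjS hkS).1 hjk, (hf.lt_iff_gt hiS hjS).1 hij⟩

theorem union (hx : IsConfigOn s x) (hy : IsConfigOn t y) (hst : ∀ i ∈ s, ∀ j ∈ t, i < j) :
    IsConfigOn (s ∪ t) (x ∪ y) := by
  have hlt : ∀ B ∈ x, ∀ C ∈ y, ∀ i ∈ B, ∀ j ∈ C, i < j := fun B hB C hC i hi j hj =>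
    hst i (hx.subset B hB hi) j (hy.subset C hC hj)
  refine ⟨?_, ?_, ?_, ?_, ?_⟩ <;> simp only [mem_union]
  · rintro B (hB | hB)
    exacts [(hx.subset B hB).trans subset_union_left, (hy.subset B hB).trans subset_union_right]
  · rintro B (hB | hB)
    exacts [hx.nonempty B hB, hy.nonempty B hB]
  · rintro B (hB | hB)
    exacts [hx.card_le_two B hB, hy.card_le_two B hB]
  · rintro B (hB | hB) C (hC | hC) hne
    · exact hx.disjoint B hB C hC hne
    · exact disjoint_left.2 fun i hi hi' => (hlt B hB C hC i hi i hi').false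
    · exact disjoint_left.2 fun i hi hi' => (hlt C hC B hB i hi' i hi).false
    · exact hy.disjoint B hB C hC hne
  · rintro B (hB | hB) C (hC | hC) hBC
    · exact hx.not_crosses B hB C hC hBC
    · obtain ⟨i, hi, j, hj, k, hk, l, hl, hij, hjk, hkl⟩ := hBC
      exact (hlt B hB C hC k hk j hj).not_gt hjk
    · obtain ⟨i, hi, j, hj, k, hk, l, hl, hij, hjk, hkl⟩ := hBC
      exact (hlt C hC B hB j hj i hi).not_gt hij
    · exact hy.not_crosses B hB C hC hBC

theorem insert_pair (hx : IsConfigOn s x) {p q : ℕ} (hp : p ∈ s) (hq : q ∈ s) (hpq : p ≤ q)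
    (hsep : ∀ B ∈ x, B ⊆ Ioo p q ∨ Disjoint B (Icc p q)) : IsConfigOn s (insert {p, q} x) := by
  have hout : ∀ B ∈ x, ∀ j ∈ B, ∀ l ∈ B, j ≠ p ∧ j ≠ q ∧ (p < j → j < q → p < l ∧ l < q) := by
    intro B hB j hj l hl
    rcases hsep B hB with h | h
    · have := mem_Ioo.1 (h hj)
      have := mem_Ioo.1 (h hl)
      omega
    · have := disjoint_left.1 h hj
      have := disjoint_left.1 h hl
      simp only [mem_Icc] at *
      omega
  refine ⟨?_, ?_, ?_, ?_, ?_⟩ <;> simp only [forall_mem_insert]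
  · exact ⟨by simp [insert_subset_iff, hp, hq], hx.subset⟩
  · exact ⟨insert_nonempty _ _, hx.nonempty⟩
  · exact ⟨Finset.card_le_two, hx.card_le_two⟩
  · have hdisj : ∀ B ∈ x, Disjoint {p, q} B := fun B hB => by
      simp only [disjoint_insert_left, disjoint_singleton_left]
      exact ⟨fun h => (hout B hB p h p h).1 rfl, fun h => (hout B hB q h q h).2.1 rfl⟩
    exact ⟨⟨fun h => absurd rfl h, fun B hB _ => hdisj B hB⟩, fun B hB =>
      ⟨fun _ => (hdisj B hB).symm, hx.disjoint B hB⟩⟩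
  · refine ⟨⟨?_, fun C hC => ?_⟩, fun B hB => ⟨?_, hx.not_crosses B hB⟩⟩ <;>
      rintro ⟨i, hi, j, hj, k, hk, l, hl, hij, hjk, hkl⟩ <;>
      simp only [mem_insert, mem_singleton] at hi hj hk hl
    · omega
    · have := hout C hC j hj l hl
      omega
    · have := hout B hB k hk i hi
      omega

theorem subset_Ioo_or_disjoint_Icc (hx : IsConfigOn s x) {p q : ℕ} (hpq : {p, q} ∈ x)
    {B : Finset ℕ} (hB : B ∈ x) (hne : B ≠ {p, q}) : B ⊆ Ioo p q ∨ Disjoint B (Icc p q) := by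
  have hd := hx.disjoint B hB _ hpq hne
  have hp : p ∉ B := disjoint_right.1 hd (mem_insert_self p _)
  have hq : q ∉ B := disjoint_right.1 hd (mem_insert_of_mem (mem_singleton_self q))
  by_cases hin : ∃ j ∈ B, p < j ∧ j < q
  · obtain ⟨j, hj, hpj, hjq⟩ := hin
    refine Or.inl fun l hl => mem_Ioo.2 ?_
    have hlp : l ≠ p := fun h => hp (h ▸ hl)
    have hlq : l ≠ q := fun h => hq (h ▸ hl)
    by_contra hl'
    rcases lt_or_gt_of_ne hlp with hlp | hlp
    · exact hx.not_crosses B hB _ hpq ⟨l, hl, p, by simp, j, hj, q, by simp, hlp, hpj, hjq⟩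
    · exact hx.not_crosses _ hpq B hB ⟨p, by simp, j, hj, q, by simp, l, hl, hpj, hjq, by omega⟩
  · refine Or.inr (disjoint_left.2 fun j hj hj' => hin ⟨j, hj, ?_⟩)
    have hjp : j ≠ p := fun h => hp (h ▸ hj)
    have hjq : j ≠ q := fun h => hq (h ▸ hj)
    rw [mem_Icc] at hj'
    omega

end IsConfigOn

theorem filter_configsOn_forall_notMem (s : Finset ℕ) (a : ℕ) :
    (configsOn s).filter (fun x => ∀ B ∈ x, a ∉ B) = configsOn (s.erase a) := by
  ext x
  simp only [mem_filter, mem_configsOn]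
  constructor
  · rintro ⟨hx, ha⟩
    exact hx.of_subset subset_rfl fun B hB i hi =>
      mem_erase.2 ⟨fun h => ha B hB (h ▸ hi), hx.subset B hB hi⟩
  · intro hx
    exact ⟨hx.of_subset subset_rfl fun B hB => (hx.subset B hB).trans (erase_subset a s),
      fun B hB ha => (mem_erase.1 (hx.subset B hB ha)).1 rfl⟩

theorem card_eq_card_filter_add_sum {X : Finset (Finset (Finset ℕ))} {s : Finset ℕ} {a : ℕ}
    (T : Finset ℕ) (hX : ∀ x ∈ X, IsConfigOn s x) (hT : ∀ x ∈ X, ∀ q, {a, q} ∈ x → q ∈ T) :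
    #X = #(X.filter fun x => ∀ B ∈ x, a ∉ B) + ∑ q ∈ T, #(X.filter fun x => {a, q} ∈ x) := by
  rw [← card_filter_add_card_filter_not (fun x => ∀ B ∈ x, a ∉ B), ← card_biUnion]
  · congr 2
    ext x
    simp only [mem_filter, mem_biUnion, not_forall, not_not]
    constructor
    · rintro ⟨hx, B, hB, haB⟩
      obtain ⟨q, rfl⟩ := (hX x hx).exists_eq_pair hB haB
      exact ⟨q, hT x hx q hB, hx, hB⟩
    · rintro ⟨q, -, hx, hq⟩
      exact ⟨hx, _, hq, mem_insert_self a _⟩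
  · intro q _ q' _ hqq'
    refine disjoint_filter.2 fun x hx hq hq' => ?_
    refine disjoint_left.1 ((hX x hx).disjoint _ hq _ hq' fun h => hqq' (pair_eq_pair_right h))
      (mem_insert_self a _) (mem_insert_self a _)

theorem IsConfigOn.insert_pair_union {a b q : ℕ} {y z : Finset (Finset ℕ)}
    (hy : IsConfigOn (Icc (a + 1) (q - 1)) y) (hz : IsConfigOn (Icc (q + 1) b) z) (haq : a ≤ q)
    (hqb : q ≤ b) : IsConfigOn (Icc a b) (insert {a, q} (y ∪ z)) := by
  have hyz := hy.union hz fun i hi j hj => by simp only [mem_Icc] at hi hj; omega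
  refine (hyz.of_subset subset_rfl fun B hB => (hyz.subset B hB).trans fun i hi => ?_).insert_pair
    (mem_Icc.2 ⟨le_rfl, haq.trans hqb⟩) (mem_Icc.2 ⟨haq, hqb⟩) haq fun B hB => ?_
  · simp only [mem_union, mem_Icc] at hi ⊢
    omega
  rcases mem_union.1 hB with hB | hB
  · refine Or.inl fun i hi => ?_
    have := mem_Icc.1 (hy.subset B hB hi)
    rw [mem_Ioo]
    omega
  · refine Or.inr (disjoint_left.2 fun i hi hi' => ?_)
    have := mem_Icc.1 (hz.subset B hB hi)
    rw [mem_Icc] at hi'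
    omega

theorem IsConfigOn.insert_pair_filter_union_filter {a b q : ℕ} {x : Finset (Finset ℕ)}
    (hx : IsConfigOn (Icc a b) x) (hq : {a, q} ∈ x) :
    insert {a, q} (x.filter (· ⊆ Icc (a + 1) (q - 1)) ∪ x.filter (· ⊆ Icc (q + 1) b)) = x := by
  ext B
  simp only [mem_insert, mem_union, mem_filter]
  constructor
  · rintro (rfl | ⟨hB, -⟩ | ⟨hB, -⟩)
    exacts [hq, hB, hB]
  intro hB
  by_cases hne : B = {a, q}
  · exact Or.inl hne
  rcases hx.subset_Ioo_or_disjoint_Icc hq hB hne with h | h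
  · refine Or.inr (Or.inl ⟨hB, fun i hi => ?_⟩)
    have := mem_Ioo.1 (h hi)
    rw [mem_Icc]
    omega
  · refine Or.inr (Or.inr ⟨hB, fun i hi => ?_⟩)
    have := mem_Icc.1 (hx.subset B hB hi)
    have := disjoint_left.1 h hi
    simp only [mem_Icc] at *
    omega

theorem card_filter_pair_mem_configsOn_Icc {a b q : ℕ} (haq : a ≤ q) (hqb : q ≤ b) :
    #((configsOn (Icc a b)).filter fun x => {a, q} ∈ x) =
      #(configsOn (Icc (a + 1) (q - 1))) * #(configsOn (Icc (q + 1) b)) := by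
  set L := Icc (a + 1) (q - 1)
  set R := Icc (q + 1) b
  have hLR : Disjoint L R := by simp only [L, R, disjoint_left, mem_Icc]; intros; omega
  have haL : ¬{a, q} ⊆ L := fun h => by simpa [L] using h (mem_insert_self a _)
  have haR : ¬{a, q} ⊆ R := fun h => by
    have := h (mem_insert_self a _)
    simp only [R, mem_Icc] at this
    omega
  rw [← card_product]
  refine card_nbij' (fun x => (x.filter (· ⊆ L), x.filter (· ⊆ R)))
    (fun yz => insert {a, q} (yz.1 ∪ yz.2)) ?_ ?_ ?_ ?_
  · intro x hx
    simp only [mem_coe, mem_filter, mem_product, mem_configsOn] at hx ⊢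
    exact ⟨hx.1.filter_subset L, hx.1.filter_subset R⟩
  · rintro ⟨y, z⟩ hyz
    simp only [mem_coe, mem_filter, mem_product, mem_configsOn] at hyz ⊢
    exact ⟨hyz.1.insert_pair_union hyz.2 haq hqb, mem_insert_self _ _⟩
  · intro x hx
    simp only [mem_coe, mem_filter, mem_configsOn] at hx
    exact hx.1.insert_pair_filter_union_filter hx.2
  · rintro ⟨y, z⟩ hyz
    simp only [mem_coe, mem_product, mem_configsOn] at hyz
    simp only [filter_insert, haL, haR, if_false, filter_union,
      hyz.1.filter_subset_eq_self subset_rfl, hyz.2.filter_subset_eq_self subset_rfl,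
      hyz.1.filter_subset_eq_empty hLR, hyz.2.filter_subset_eq_empty hLR.symm,
      union_empty, empty_union]

theorem card_filter_pair_mem_configsOn_Icc_self {a q : ℕ} (haq : a ≤ q) :
    #((configsOn (Icc a q)).filter fun x => {a, q} ∈ x) = #(configsOn (Icc (a + 1) (q - 1))) := by
  rw [card_filter_pair_mem_configsOn_Icc haq le_rfl, Icc_eq_empty_of_lt (Nat.lt_succ_self q),
    configsOn_empty, card_singleton, mul_one]

theorem card_configsOn_Icc_eq_add_sum (a b : ℕ) :
    #(configsOn (Icc a b)) = #(configsOn (Icc (a + 1) b)) +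
      ∑ q ∈ Icc a b, #(configsOn (Icc (a + 1) (q - 1))) * #(configsOn (Icc (q + 1) b)) := by
  rw [card_eq_card_filter_add_sum (Icc a b) (fun x hx => mem_configsOn.1 hx)
    fun x hx q hq => (mem_configsOn.1 hx).subset _ hq (mem_insert_of_mem (mem_singleton_self q)),
    filter_configsOn_forall_notMem, Icc_erase_left, ← Icc_add_one_left_eq_Ioc]
  refine congrArg _ (sum_congr rfl fun q hq => ?_)
  rw [mem_Icc] at hq
  exact card_filter_pair_mem_configsOn_Icc hq.1 hq.2

theorem card_configsOn_Icc (a b : ℕ) : #(configsOn (Icc a b)) = catalan (b + 1 - a + 1) := by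
  induction hn : b + 1 - a using Nat.strong_induction_on generalizing a b with
  | _ n ih =>
    rcases Nat.lt_or_ge b a with hba | hab
    · rw [Icc_eq_empty_of_lt hba, configsOn_empty, card_singleton, show n = 0 by omega, catalan_one]
    rw [card_configsOn_Icc_eq_add_sum, ih (b - a) (by omega) _ _ (by omega),
      ← Ico_add_one_right_eq_Icc, sum_Ico_eq_sum_range, hn, catalan_succ n,
      Fin.sum_univ_eq_sum_range (fun i => catalan i * catalan (n - i)), sum_range_succ,
      Nat.sub_self, catalan_zero, mul_one, add_comm]
    congr 1
    · refine sum_congr rfl fun k hk => ?_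
      rw [mem_range] at hk
      rw [ih _ (by omega) _ _ rfl, ih _ (by omega) _ _ rfl]
      congr 1
      · rcases k with _ | k
        -- the ball `{a}`, with an empty inside
        · rw [show a + 0 - 1 + 1 - (a + 1) + 1 = 1 by omega, catalan_one, catalan_zero]
        · congr 1
          omega
      · congr 1
        omega
    · congr 1
      omega

section Relabel

variable {x : Finset (Finset ℕ)}

theorem relabel_relabel (f g : ℕ → ℕ) (x : Finset (Finset ℕ)) :
    relabel g (relabel f x) = relabel (g ∘ f) x := by
  simp only [relabel, image_image]
  exact image_congr fun B _ => by simp [image_image]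

theorem relabel_congr {f g : ℕ → ℕ} (h : ∀ B ∈ x, ∀ i ∈ B, f i = g i) :
    relabel f x = relabel g x :=
  image_congr fun B hB => image_congr fun i hi => h B hB i hi

theorem relabel_eq_self {f : ℕ → ℕ} (h : ∀ B ∈ x, ∀ i ∈ B, f i = i) : relabel f x = x :=
  calc relabel f x = x.image id :=
        image_congr fun B hB => (image_congr fun i hi => h B hB i hi).trans image_id
    _ = x := image_id

theorem reflect_relabel {f : ℕ → ℕ} {c c' : ℕ} (h : ∀ B ∈ x, ∀ i ∈ B, c' - f i = f (c - i)) :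
    reflect c' (relabel f x) = relabel f (reflect c x) := by
  simp only [reflect, relabel_relabel]
  exact relabel_congr h

theorem reflect_filter_subset {c : ℕ} {t t' : Finset ℕ} (hx : ∀ B ∈ x, ∀ i ∈ B, i ≤ c)
    (htt' : ∀ i ≤ c, i ∈ t ↔ c - i ∈ t') :
    reflect c (x.filter (· ⊆ t)) = (reflect c x).filter (· ⊆ t') := by
  ext B
  simp only [reflect, relabel, mem_image, mem_filter]
  constructor
  · rintro ⟨B', ⟨hB', hB't⟩, rfl⟩
    exact ⟨⟨B', hB', rfl⟩, image_subset_iff.2 fun i hi => (htt' i (hx B' hB' i hi)).1 (hB't hi)⟩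
  · rintro ⟨⟨B', hB', rfl⟩, hsub⟩
    exact ⟨B', ⟨hB', fun i hi => (htt' i (hx B' hB' i hi)).2 (hsub (mem_image_of_mem _ hi))⟩, rfl⟩

theorem reflect_union (c : ℕ) (x y : Finset (Finset ℕ)) :
    reflect c (x ∪ y) = reflect c x ∪ reflect c y :=
  image_union _ _

theorem image_mem_of_reflect_eq {c : ℕ} (hsym : reflect c x = x) {B : Finset ℕ} (hB : B ∈ x) :
    B.image (c - ·) ∈ x := by
  rw [← hsym]
  exact mem_image_of_mem _ hB

end Relabel

theorem IsConfigOn.reflect_reflect {s : Finset ℕ} {x : Finset (Finset ℕ)} {c : ℕ}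
    (hx : IsConfigOn s x) (hs : ∀ i ∈ s, i ≤ c) : reflect c (reflect c x) = x := by
  rw [reflect, relabel_relabel]
  exact relabel_eq_self fun B hB i hi => by
    have := hs i (hx.subset B hB hi)
    simp only [Function.comp_apply]
    omega

theorem IsConfigOn.reflect {s t : Finset ℕ} {x : Finset (Finset ℕ)} {c : ℕ}
    (hx : IsConfigOn s x) (hs : ∀ i ∈ s, i ≤ c) (hst : ∀ i ∈ s, c - i ∈ t) :
    IsConfigOn t (reflect c x) :=
  hx.relabel (Or.inr fun i _ j hj hij => by have := hs j hj; dsimp only; omega) hst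

theorem mem_symConfigsOn {s : Finset ℕ} {c : ℕ} {x : Finset (Finset ℕ)} :
    x ∈ symConfigsOn s c ↔ IsConfigOn s x ∧ reflect c x = x := by
  rw [symConfigsOn, mem_filter, mem_configsOn]

theorem symConfigsOn_empty (c : ℕ) : symConfigsOn ∅ c = {∅} := by
  rw [symConfigsOn, configsOn_empty, filter_singleton, if_pos (by simp [reflect, relabel])]

section Symmetric

variable {a b c : ℕ}

theorem filter_symConfigsOn_Icc_forall_notMem (hc : a + b = c) :
    (symConfigsOn (Icc a b) c).filter (fun x => ∀ B ∈ x, a ∉ B) =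
      symConfigsOn (Icc (a + 1) (b - 1)) c := by
  ext x
  simp only [mem_filter, mem_symConfigsOn]
  constructor
  · rintro ⟨⟨hx, hsym⟩, ha⟩
    refine ⟨hx.of_subset subset_rfl fun B hB i hi => ?_, hsym⟩
    have hia : i ≠ a := fun h => ha B hB (h ▸ hi)
    have hib : i ≠ b := fun h => ha _ (image_mem_of_reflect_eq hsym hB)
      (mem_image.2 ⟨i, hi, by omega⟩)
    have := mem_Icc.1 (hx.subset B hB hi)
    rw [mem_Icc]
    omega
  · rintro ⟨hx, hsym⟩
    refine ⟨⟨hx.of_subset subset_rfl fun B hB => (hx.subset B hB).trans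
      (Icc_subset_Icc (Nat.le_succ a) (Nat.sub_le b 1)), hsym⟩, fun B hB haB => ?_⟩
    have := mem_Icc.1 (hx.subset B hB haB)
    omega

theorem card_filter_pair_mem_symConfigsOn_Icc_right (hab : a ≤ b) (hc : a + b = c) :
    #((symConfigsOn (Icc a b) c).filter fun x => {a, b} ∈ x) =
      #(symConfigsOn (Icc (a + 1) (b - 1)) c) := by
  set M := Icc (a + 1) (b - 1)
  have habM : ¬{a, b} ⊆ M := fun h => by simpa [M] using h (mem_insert_self a _)
  refine card_nbij' (fun x => x.filter (· ⊆ M)) (insert {a, b}) ?_ ?_ ?_ ?_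
  · intro x hx
    simp only [mem_coe, mem_filter, mem_symConfigsOn] at hx ⊢
    refine ⟨hx.1.1.filter_subset M, ?_⟩
    rw [reflect_filter_subset (t' := M)
      (fun B hB i hi => by have := mem_Icc.1 (hx.1.1.subset B hB hi); omega)
      fun i hi => by simp only [M, mem_Icc]; omega, hx.1.2]
  · intro z hz
    simp only [mem_coe, mem_filter, mem_symConfigsOn] at hz ⊢
    have hx := hz.1.insert_pair_union (isConfigOn_empty (Icc (b + 1) b)) hab le_rfl
    rw [union_empty] at hx
    refine ⟨⟨hx, ?_⟩, mem_insert_self _ _⟩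
    simp only [reflect, relabel, image_insert, image_singleton] at hz ⊢
    rw [hz.2, show c - a = b by omega, show c - b = a by omega, pair_comm]
  · intro x hx
    simp only [mem_coe, mem_filter, mem_symConfigsOn] at hx
    have := hx.1.1.insert_pair_filter_union_filter hx.2
    rwa [hx.1.1.filter_subset_eq_empty (t := Icc (b + 1) b) (by simp), union_empty] at this
  · intro z hz
    simp only [mem_coe, mem_symConfigsOn] at hz
    simp only [filter_insert, habM, if_false, hz.1.filter_subset_eq_self subset_rfl]

theorem isConfigOn_union_union_reflect {q : ℕ} {w z : Finset (Finset ℕ)}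
    (hw : IsConfigOn (Icc a q) w) (hz : IsConfigOn (Icc (q + 1) (c - q - 1)) z) (haq : a ≤ q)
    (hqc : 2 * q < c) (hc : a + b = c) : IsConfigOn (Icc a b) (w ∪ (z ∪ reflect c w)) := by
  have hwR : IsConfigOn (Icc (c - q) b) (reflect c w) :=
    hw.reflect (fun i hi => by rw [mem_Icc] at hi; omega)
      fun i hi => by simp only [mem_Icc] at hi ⊢; omega
  have hx := hw.union (hz.union hwR fun i hi j hj => ?_) fun i hi j hj => ?_
  · refine hx.of_subset subset_rfl fun B hB => (hx.subset B hB).trans fun i hi => ?_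
    simp only [mem_union, mem_Icc] at hi ⊢
    omega
  · simp only [mem_Icc] at hi hj
    omega
  · simp only [mem_union, mem_Icc] at hi hj
    omega

theorem IsConfigOn.subset_Icc_or_subset_Icc_or_subset_Icc {q : ℕ} {x : Finset (Finset ℕ)}
    (hx : IsConfigOn (Icc a b) x) (hq : {a, q} ∈ x) (hq' : {c - q, b} ∈ x) (haq : a ≤ q)
    (hqc : 2 * q < c) (hc : a + b = c) {B : Finset ℕ} (hB : B ∈ x) :
    B ⊆ Icc a q ∨ B ⊆ Icc (q + 1) (c - q - 1) ∨ B ⊆ Icc (c - q) b := by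
  by_cases h₁ : B = {a, q}
  · refine Or.inl (h₁ ▸ fun i hi => ?_)
    simp only [mem_insert, mem_singleton] at hi
    rw [mem_Icc]
    omega
  by_cases h₂ : B = {c - q, b}
  · refine Or.inr (Or.inr (h₂ ▸ fun i hi => ?_))
    simp only [mem_insert, mem_singleton] at hi
    rw [mem_Icc]
    omega
  rcases hx.subset_Ioo_or_disjoint_Icc hq hB h₁ with hin | hout
  · exact Or.inl ((hin.trans Ioo_subset_Icc_self))
  rcases hx.subset_Ioo_or_disjoint_Icc hq' hB h₂ with hin' | hout'
  · exact Or.inr (Or.inr (hin'.trans Ioo_subset_Icc_self))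
  refine Or.inr (Or.inl fun i hi => ?_)
  have := mem_Icc.1 (hx.subset B hB hi)
  have := disjoint_left.1 hout hi
  have := disjoint_left.1 hout' hi
  simp only [mem_Icc] at *
  omega

theorem filter_union_filter_union_reflect_eq_self {q : ℕ} {x : Finset (Finset ℕ)}
    (hx : IsConfigOn (Icc a b) x) (hsym : reflect c x = x) (hq : {a, q} ∈ x) (haq : a ≤ q)
    (hqc : 2 * q < c) (hc : a + b = c) :
    x.filter (· ⊆ Icc a q) ∪ (x.filter (· ⊆ Icc (q + 1) (c - q - 1)) ∪
      reflect c (x.filter (· ⊆ Icc a q))) = x := by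
  have hq' : {c - q, b} ∈ x := by
    simpa [show c - a = b by omega, pair_comm] using image_mem_of_reflect_eq hsym hq
  rw [reflect_filter_subset (t' := Icc (c - q) b)
    (fun B hB i hi => by have := mem_Icc.1 (hx.subset B hB hi); omega)
    fun i hi => by simp only [mem_Icc]; omega, hsym]
  ext B
  simp only [mem_union, mem_filter]
  constructor
  · rintro (⟨hB, -⟩ | ⟨hB, -⟩ | ⟨hB, -⟩) <;> exact hB
  · intro hB
    rcases hx.subset_Icc_or_subset_Icc_or_subset_Icc hq hq' haq hqc hc hB with h | h | h
    exacts [Or.inl ⟨hB, h⟩, Or.inr (Or.inl ⟨hB, h⟩), Or.inr (Or.inr ⟨hB, h⟩)]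

theorem card_filter_pair_mem_symConfigsOn_Icc {q : ℕ} (haq : a ≤ q) (hqc : 2 * q < c)
    (hc : a + b = c) :
    #((symConfigsOn (Icc a b) c).filter fun x => {a, q} ∈ x) =
      #(configsOn (Icc (a + 1) (q - 1))) * #(symConfigsOn (Icc (q + 1) (c - q - 1)) c) := by
  set L := Icc a q
  set M := Icc (q + 1) (c - q - 1)
  set R := Icc (c - q) b
  have hLM : Disjoint L M := by simp only [L, M, disjoint_left, mem_Icc]; intros; omega
  have hLR : Disjoint L R := by simp only [L, R, disjoint_left, mem_Icc]; intros; omega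
  have hMR : Disjoint M R := by simp only [M, R, disjoint_left, mem_Icc]; intros; omega
  have hLc : ∀ i ∈ L, i ≤ c := fun i hi => by simp only [L, mem_Icc] at hi; omega
  rw [← card_filter_pair_mem_configsOn_Icc_self haq, ← card_product]
  refine card_nbij' (fun x => (x.filter (· ⊆ L), x.filter (· ⊆ M)))
    (fun wz => wz.1 ∪ (wz.2 ∪ reflect c wz.1)) ?_ ?_ ?_ ?_
  · intro x hx
    simp only [mem_coe, mem_filter, mem_product, mem_configsOn, mem_symConfigsOn] at hx ⊢
    refine ⟨⟨hx.1.1.filter_subset L, hx.2, fun i hi => ?_⟩, hx.1.1.filter_subset M, ?_⟩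
    · simp only [mem_insert, mem_singleton] at hi
      simp only [L, mem_Icc]
      omega
    · rw [reflect_filter_subset (t' := M) (fun B hB i hi => by
        have := mem_Icc.1 (hx.1.1.subset B hB hi); omega)
        fun i hi => by simp only [M, mem_Icc]; omega, hx.1.2]
  · rintro ⟨w, z⟩ hwz
    simp only [mem_coe, mem_filter, mem_product, mem_configsOn, mem_symConfigsOn] at hwz ⊢
    obtain ⟨⟨hw, hwq⟩, hz, hzsym⟩ := hwz
    refine ⟨⟨isConfigOn_union_union_reflect hw hz haq hqc hc, ?_⟩, mem_union_left _ hwq⟩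
    rw [reflect_union, reflect_union, hzsym, hw.reflect_reflect hLc]
    ac_rfl
  · intro x hx
    simp only [mem_coe, mem_filter, mem_symConfigsOn] at hx
    exact filter_union_filter_union_reflect_eq_self hx.1.1 hx.1.2 hx.2 haq hqc hc
  · rintro ⟨w, z⟩ hwz
    simp only [mem_coe, mem_filter, mem_product, mem_configsOn, mem_symConfigsOn] at hwz
    obtain ⟨⟨hw, -⟩, hz, -⟩ := hwz
    have hwR : IsConfigOn R (reflect c w) :=
      hw.reflect hLc fun i hi => by simp only [R, mem_Icc] at hi ⊢; omega
    simp only [filter_union, hw.filter_subset_eq_self (t := L) subset_rfl,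
      hz.filter_subset_eq_self subset_rfl, hz.filter_subset_eq_empty hLM.symm,
      hwR.filter_subset_eq_empty hLR.symm, hw.filter_subset_eq_empty hLM,
      hwR.filter_subset_eq_empty hMR.symm, union_empty, empty_union]

end Symmetric

theorem mem_insert_Ico_of_pair_mem_symConfigsOn_Icc {x : Finset (Finset ℕ)} {a b c q : ℕ}
    (hx : x ∈ symConfigsOn (Icc a b) c) (hc : a + b = c) (hq : {a, q} ∈ x) :
    q ∈ insert b (Ico a ((c + 1) / 2)) := by
  obtain ⟨hx, hsym⟩ := mem_symConfigsOn.1 hx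
  have := mem_Icc.1 (hx.subset _ hq (mem_insert_of_mem (mem_singleton_self q)))
  rw [mem_insert, mem_Ico]
  by_contra! h
  have hq' : {c - q, b} ∈ x := by
    simpa [show c - a = b by omega, pair_comm] using image_mem_of_reflect_eq hsym hq
  have hne : ({c - q, b} : Finset ℕ) ≠ {a, q} := fun he => by
    have : b ∈ ({a, q} : Finset ℕ) := he ▸ by simp
    simp only [mem_insert, mem_singleton] at this
    omega
  rcases hx.subset_Ioo_or_disjoint_Icc hq hq' hne with hin | hout
  · have := mem_Ioo.1 (hin (by simp : b ∈ ({c - q, b} : Finset ℕ)))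
    omega
  · exact disjoint_left.1 hout (by simp : c - q ∈ ({c - q, b} : Finset ℕ)) (mem_Icc.2 (by omega))

theorem card_symConfigsOn_Icc_eq_add_sum {a b c : ℕ} (hab : a ≤ b) (hc : a + b = c) :
    #(symConfigsOn (Icc a b) c) = 2 * #(symConfigsOn (Icc (a + 1) (b - 1)) c) +
      ∑ q ∈ Ico a ((c + 1) / 2),
        #(configsOn (Icc (a + 1) (q - 1))) * #(symConfigsOn (Icc (q + 1) (c - q - 1)) c) := by
  rw [card_eq_card_filter_add_sum _ (fun x hx => (mem_symConfigsOn.1 hx).1)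
      fun x hx q hq => mem_insert_Ico_of_pair_mem_symConfigsOn_Icc hx hc hq,
    sum_insert (by rw [mem_Ico]; omega), filter_symConfigsOn_Icc_forall_notMem hc,
    card_filter_pair_mem_symConfigsOn_Icc_right hab hc, two_mul, add_assoc]
  refine congrArg _ (congrArg _ (sum_congr rfl fun q hq => ?_))
  rw [mem_Ico] at hq
  exact card_filter_pair_mem_symConfigsOn_Icc hq.1 (by omega) hc

theorem card_symConfigsOn_Icc_add (a b c d : ℕ) (hbc : b ≤ c) :
    #(symConfigsOn (Icc (a + d) (b + d)) (c + 2 * d)) = #(symConfigsOn (Icc a b) c) := by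
  refine card_nbij' (relabel (· - d)) (relabel (· + d)) ?_ ?_ ?_ ?_
  · intro x hx
    obtain ⟨hx, hsym⟩ := mem_symConfigsOn.1 hx
    have hxd : ∀ B ∈ x, ∀ i ∈ B, a + d ≤ i ∧ i ≤ b + d := fun B hB i hi =>
      mem_Icc.1 (hx.subset B hB hi)
    refine mem_symConfigsOn.2 ⟨hx.relabel (Or.inl fun i hi j hj hij => ?_) fun i hi => ?_, ?_⟩
    · simp only [coe_Icc, Set.mem_Icc] at hi hj ⊢
      omega
    · simp only [mem_Icc] at hi ⊢
      omega
    · rw [reflect_relabel (c := c + 2 * d) fun B hB i hi => by have := hxd B hB i hi; omega, hsym]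
  · intro z hz
    obtain ⟨hz, hsym⟩ := mem_symConfigsOn.1 hz
    refine mem_symConfigsOn.2
      ⟨hz.relabel (Or.inl fun i _ j _ hij => by dsimp only; omega) fun i hi => ?_, ?_⟩
    · simp only [mem_Icc] at hi ⊢
      omega
    · rw [reflect_relabel (c := c) fun B hB i hi => by
        have := mem_Icc.1 (hz.subset B hB hi); omega, hsym]
  · intro x hx
    have hx := (mem_symConfigsOn.1 hx).1
    rw [relabel_relabel]
    exact relabel_eq_self fun B hB i hi => by
      have := mem_Icc.1 (hx.subset B hB hi)
      simp only [Function.comp_apply]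
      omega
  · intro z _
    rw [relabel_relabel]
    exact relabel_eq_self fun B _ i _ => by simp

theorem card_symConfigsOn_Icc_eq_card_symConfigs {m q : ℕ} (h : 2 * q ≤ m) :
    #(symConfigsOn (Icc (q + 1) (m - q)) (m + 1)) = #(symConfigs (m - 2 * q)) := by
  rw [symConfigs, ← card_symConfigsOn_Icc_add 1 (m - 2 * q) (m - 2 * q + 1) q (by omega),
    show 1 + q = q + 1 by ring, show m - 2 * q + q = m - q by omega,
    show m - 2 * q + 1 + 2 * q = m + 1 by omega]

theorem card_symConfigs_zero : #(symConfigs 0) = 1 := by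
  simp [symConfigs, symConfigsOn_empty]

theorem card_symConfigs_one : #(symConfigs 1) = 2 := by
  rw [symConfigs, card_symConfigsOn_Icc_eq_add_sum le_rfl rfl]
  simp [symConfigsOn_empty]

theorem card_symConfigs_eq_three_mul_add_sum {m : ℕ} (hm : 2 ≤ m) :
    #(symConfigs m) = 3 * #(symConfigs (m - 2)) +
      ∑ i ∈ Icc 2 (m / 2), catalan (i - 1) * #(symConfigs (m - 2 * i)) := by
  have hsum : Ico 1 ((m + 1 + 1) / 2) = insert 1 (Icc 2 (m / 2)) := by
    ext i
    simp only [mem_Ico, mem_insert, mem_Icc]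
    omega
  have hterm : ∀ i ∈ Icc 2 (m / 2), #(configsOn (Icc (1 + 1) (i - 1))) *
      #(symConfigsOn (Icc (i + 1) (m + 1 - i - 1)) (m + 1)) =
        catalan (i - 1) * #(symConfigs (m - 2 * i)) := fun i hi => by
    rw [mem_Icc] at hi
    rw [card_configsOn_Icc, show i - 1 + 1 - (1 + 1) + 1 = i - 1 by omega,
      show m + 1 - i - 1 = m - i by omega, card_symConfigsOn_Icc_eq_card_symConfigs (by omega)]
  rw [symConfigs, card_symConfigsOn_Icc_eq_add_sum (by omega) (by omega), hsum,
    sum_insert (by simp), sum_congr rfl hterm, show m + 1 - 1 - 1 = m - 1 by omega,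
    card_symConfigsOn_Icc_eq_card_symConfigs (q := 1) (by omega), Icc_eq_empty_of_lt (by omega),
    configsOn_empty, card_singleton]
  ring

theorem fixed_configs_recurrence (F : ℕ → ℕ)
    (hF : ∀ m, F m = ((Configs m).filter fun x =>
      x.image (fun B => B.image fun i => m + 1 - i) = x).card) :
    F 0 = 1 ∧ F 1 = 2 ∧ F 2 = 3 ∧ F 3 = 6 ∧
    ∀ m, 4 ≤ m →
      F m = 3 * F (m - 2) + ∑ i ∈ Finset.Icc 2 (m / 2), catalan (i - 1) * F (m - 2 * i) := by
  have hsym : ∀ m, F m = #(symConfigs m) := fun m => by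
    rw [hF, configs_eq_configsOn]
    rfl
  have hrec : ∀ m, 2 ≤ m →
      F m = 3 * F (m - 2) + ∑ i ∈ Icc 2 (m / 2), catalan (i - 1) * F (m - 2 * i) :=
    fun m hm => by simpa only [hsym] using card_symConfigs_eq_three_mul_add_sum hm
  have h₀ : F 0 = 1 := (hsym 0).trans card_symConfigs_zero
  have h₁ : F 1 = 2 := (hsym 1).trans card_symConfigs_one
  refine ⟨h₀, h₁, ?_, ?_, fun m hm => hrec m (by omega)⟩
  · simp [hrec 2 le_rfl, h₀]
  · simp [hrec 3 (by norm_num), h₁]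
end
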